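/- arXiv:1011.1449 — 3 statements merged into one kernel-verified Lean document; each statement's English description precedes it below -/
import Mathlib

section
/- Let n > 0 and let k ≥ 1 be an odd integer. Then there exist no real number A ≠ 0 and no real exponent m such that the function Y(y) = A·y^m satisfies (−1)^{k+1}·Y^{(2k)}(y) + (1/((2k+1)+n))·y·N_n(Y(y)) = 0 for all y > 0. In other words, for odd k the equation admits no non-oscillatory pure power solutions on (0, ∞). -/
/-!
For odd `k` the sign `(-1)^(k+1)` is `1`, and substituting `Y = A y^m` with `α = n/(n+1)` gives
`A (m)_{2k} y^(m-2k) + c |A|^(-α) A y^(m(1-α)+1) = 0` on `(0, ∞)`, where `(m)_{2k}` is the falling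
factorial and `c = 1/(2k+1+n) > 0`. Two powers of `y` cancel identically only if their exponents and
coefficients match: the exponents force `m α = 2k+1`, so `m > 2k+1` and `(m)_{2k} > 0`, while the
coefficients force `(m)_{2k} = -c |A|^(-α) < 0`.
-/

/-- The odd power nonlinearity `N_n(Y) = |Y|^{-n/(n+1)}·Y` (with `N_n(0) = 0`). -/
noncomputable def Nn (n Y : ℝ) : ℝ := |Y| ^ (-(n / (n + 1))) * Y

open Real

lemma iteratedDeriv_const_mul_rpow (A m y : ℝ) (j : ℕ) :
    iteratedDeriv j (fun t : ℝ => A * t ^ m) y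
      = A * (descPochhammer ℝ j).eval m * y ^ (m - j) := by
  rw [iteratedDeriv_const_mul_field, iteratedDeriv_eq_iterate, iter_deriv_rpow_const, mul_assoc]

lemma Nn_mul_rpow (n A m : ℝ) {y : ℝ} (hy : 0 < y) :
    Nn n (A * y ^ m) = |A| ^ (-(n / (n + 1))) * A * y ^ (m * (1 - n / (n + 1))) := by
  have hym : 0 < y ^ m := rpow_pos_of_pos hy m
  rw [Nn, abs_mul, abs_of_pos hym, mul_rpow (abs_nonneg A) hym.le, ← rpow_mul hy.le,
    mul_one_sub, sub_eq_neg_add, rpow_add hy, mul_neg]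
  ring

lemma eq_neg_and_eq_of_forall_mul_rpow_add_mul_rpow_eq_zero {a b p q : ℝ} (hb : b ≠ 0)
    (h : ∀ y : ℝ, 0 < y → a * y ^ p + b * y ^ q = 0) : a = -b ∧ p = q := by
  have hab : a = -b := by simpa [eq_neg_iff_add_eq_zero] using h 1 one_pos
  refine ⟨hab, ?_⟩
  have h2 : b * ((2 : ℝ) ^ q - 2 ^ p) = 0 := by linear_combination h 2 two_pos - 2 ^ p * hab
  rw [mul_eq_zero, sub_eq_zero] at h2
  exact (rpow_right_inj two_pos (by norm_num)).mp (h2.resolve_left hb).symm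

theorem stmt5_general (n : ℝ) (hn : 0 < n) (k : ℕ) (hko : Odd k) :
    ¬ ∃ (A m : ℝ), A ≠ 0 ∧
      ∀ y : ℝ, 0 < y →
        (-1 : ℝ) ^ (k + 1) * iteratedDeriv (2 * k) (fun t : ℝ => A * t ^ m) y
          + (1 / (2 * (k : ℝ) + 1 + n)) * y * Nn n (A * y ^ m) = 0 := by
  rintro ⟨A, m, hA, H⟩
  set α := n / (n + 1)
  set c := 1 / (2 * (k : ℝ) + 1 + n)
  set P := (descPochhammer ℝ (2 * k)).eval m
  have hpow : ∀ y : ℝ, 0 < y →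
      A * P * y ^ (m - (2 * k : ℕ)) + c * |A| ^ (-α) * A * y ^ (m * (1 - α) + 1) = 0 := by
    intro y hy
    have hy' := H y hy
    rw [hko.add_one.neg_one_pow, one_mul, iteratedDeriv_const_mul_rpow, Nn_mul_rpow n A m hy]
      at hy'
    rw [rpow_add hy, rpow_one]
    linear_combination hy'
  have hc : 0 < c * |A| ^ (-α) := by positivity
  obtain ⟨hcoef, hexp⟩ := eq_neg_and_eq_of_forall_mul_rpow_add_mul_rpow_eq_zero
    (mul_ne_zero hc.ne' hA) hpow
  have hα1 : α < 1 := (div_lt_one (by linarith)).mpr (by linarith)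
  have hα0 : 0 < α := by positivity
  have hm : 2 * (k : ℝ) + 1 < m := by push_cast at hexp; nlinarith
  have hP : 0 < P := descPochhammer_pos (by push_cast; linarith)
  have hPc : P = -(c * |A| ^ (-α)) := mul_left_cancel₀ hA (by rw [hcoef]; ring)
  linarith

/-- For `n > 0` and odd `k ≥ 1` there are no `A ≠ 0` and real
exponent `m` such that `Y(y) = A·y^m` solves
`(-1)^{k+1} Y^{(2k)} + (1/((2k+1)+n))·y·N_n(Y) = 0` on `(0, ∞)`:
for odd `k` the equation has no non-oscillatory pure power solutions. -/
theorem stmt5 (n : ℝ) (hn : 0 < n) (k : ℕ) (hk : 1 ≤ k) (hko : Odd k) :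
    ¬ ∃ (A m : ℝ), A ≠ 0 ∧
      ∀ y : ℝ, 0 < y →
        (-1 : ℝ) ^ (k + 1) * iteratedDeriv (2 * k) (fun t : ℝ => A * t ^ m) y
          + (1 / (2 * (k : ℝ) + 1 + n)) * y * Nn n (A * y ^ m) = 0 :=
  stmt5_general n hn k hko
end

section
/- Let n > 0 and b ≥ 0. There is no twice differentiable function Y : (b, ∞) → ℝ with Y(y) > 0 for all y > b satisfying Y''(y) = −(1/(n+3))·y·Y(y)^{1/(n+1)} on (b, ∞); likewise there is no such solution with Y(y) < 0 for all y > b. Consequently, every twice differentiable function Y : (b, ∞) → ℝ satisfying Y''(y) = −(1/(n+3))·y·N_n(Y(y)) on (b, ∞) has an unbounded set of zeros, i.e. all solutions are oscillatory as y → +∞. -/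
/-!
A positive solution is concave, and a concave function that stays positive on a half-line
cannot decrease anywhere, since it would then decrease at least linearly. So the solution is
nondecreasing, hence `Y'' = -c·y·Y^p ≤ -c·y₀·Y(y₀)^p < 0` beyond `y₀`, which forces `Y'` to become
negative. Negative solutions are reduced to positive ones by the oddness of `N_n`, and a solution
without zeros beyond some point has constant sign there by the intermediate value theorem.
-/

open Set

theorem exists_neg_of_deriv_le_neg {f : ℝ → ℝ} {a K : ℝ} (hK : 0 < K)
    (hf : DifferentiableOn ℝ f (Ioi a)) (hf' : ∀ y, a < y → deriv f y ≤ -K) :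
    ∃ y, a < y ∧ f y < 0 := by
  set x := a + 1
  set y := x + (|f x| + 1) / K
  have hax : a < x := by simp [x]
  have hxy : x ≤ y := le_add_of_nonneg_right (by positivity)
  have hmvt : f y - f x ≤ -K * (y - x) :=
    (convex_Ioi a).image_sub_le_mul_sub_of_deriv_le hf.continuousOn
      (by rwa [interior_Ioi]) (fun z hz => hf' z (by rwa [interior_Ioi] at hz))
      x hax y (hax.trans_le hxy) hxy
  have hKy : K * (y - x) = |f x| + 1 := by simp only [y]; field_simp; ring
  exact ⟨y, hax.trans_le hxy, by linarith [le_abs_self (f x)]⟩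

theorem deriv_nonneg_of_nonneg_of_antitoneOn_deriv {Y : ℝ → ℝ} {a : ℝ}
    (hY : DifferentiableOn ℝ Y (Ioi a)) (hY₀ : ∀ y, a < y → 0 ≤ Y y)
    (hY' : AntitoneOn (deriv Y) (Ioi a)) : ∀ y, a < y → 0 ≤ deriv Y y := by
  intro x hx
  by_contra! hneg
  obtain ⟨y, hxy, hy⟩ := exists_neg_of_deriv_le_neg (K := -deriv Y x) (by linarith)
    (hY.mono (Ioi_subset_Ioi hx.le))
    (fun y hxy => by rw [neg_neg]; exact hY' hx (hx.trans hxy) hxy.le)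
  exact (hY₀ y (hx.trans hxy)).not_gt hy

theorem IsPreconnected.forall_lt_or_forall_gt {X α : Type*} [TopologicalSpace X]
    [LinearOrder α] [TopologicalSpace α] [OrderClosedTopology α] {s : Set X}
    (hs : IsPreconnected s) {f : X → α} (hf : ContinuousOn f s) {c : α}
    (hc : ∀ x ∈ s, f x ≠ c) : (∀ x ∈ s, c < f x) ∨ (∀ x ∈ s, f x < c) := by
  by_contra! h
  obtain ⟨⟨x, hx, hxc⟩, ⟨z, hz, hzc⟩⟩ := h
  obtain ⟨w, hw, hwc⟩ := hs.intermediate_value₂ hx hz hf continuousOn_const hxc hzc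
  exact hc w hw hwc

theorem no_pos_solution_rpow {Y : ℝ → ℝ} {a c p : ℝ} (ha : 0 ≤ a) (hc : 0 < c) (hp : 0 ≤ p)
    (hd : ∀ y, a < y → DifferentiableAt ℝ Y y ∧ DifferentiableAt ℝ (deriv Y) y)
    (hpos : ∀ y, a < y → 0 < Y y)
    (heq : ∀ y, a < y → deriv (deriv Y) y = -c * y * Y y ^ p) : False := by
  have hY : DifferentiableOn ℝ Y (Ioi a) := fun y hy => (hd y hy).1.differentiableWithinAt
  have hY' : DifferentiableOn ℝ (deriv Y) (Ioi a) :=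
    fun y hy => (hd y hy).2.differentiableWithinAt
  have hY'' : ∀ y ∈ interior (Ioi a), deriv (deriv Y) y ≤ 0 := by
    intro y hy
    rw [interior_Ioi] at hy
    have : 0 < y := ha.trans_lt hy
    rw [heq y hy, neg_mul, neg_mul, neg_nonpos]
    have := hpos y hy
    positivity
  have hY'_nonneg := deriv_nonneg_of_nonneg_of_antitoneOn_deriv hY (fun y hy => (hpos y hy).le)
    (antitoneOn_of_deriv_nonpos (convex_Ioi a) hY'.continuousOn (by rwa [interior_Ioi]) hY'')
  have hmono : MonotoneOn Y (Ioi a) :=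
    monotoneOn_of_deriv_nonneg (convex_Ioi a) hY.continuousOn (by rwa [interior_Ioi])
      (fun y hy => hY'_nonneg y (by rwa [interior_Ioi] at hy))
  set y₀ := a + 1
  have hay₀ : a < y₀ := by simp [y₀]
  have hbound : ∀ y, y₀ < y → deriv (deriv Y) y ≤ -(c * y₀ * Y y₀ ^ p) := by
    intro y hy
    have hYy : Y y₀ ≤ Y y := hmono hay₀ (hay₀.trans hy) hy.le
    rw [heq y (hay₀.trans hy), neg_mul, neg_mul, neg_le_neg_iff]
    have := (hpos y₀ hay₀).le
    have := ha.trans_lt (hay₀.trans hy)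
    gcongr
  have hK : 0 < c * y₀ * Y y₀ ^ p := by
    have := hpos y₀ hay₀
    have : 0 < y₀ := ha.trans_lt hay₀
    positivity
  obtain ⟨y, hy, hneg⟩ := exists_neg_of_deriv_le_neg hK (hY'.mono (Ioi_subset_Ioi hay₀.le)) hbound
  exact (hY'_nonneg y (hay₀.trans hy)).not_gt hneg

theorem Nn_of_pos {n Y : ℝ} (hn : n + 1 ≠ 0) (hY : 0 < Y) : Nn n Y = Y ^ (1 / (n + 1)) := by
  rw [Nn, abs_of_pos hY, ← Real.rpow_add_one hY.ne']
  congr 1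
  field_simp
  ring

theorem Nn_neg (n Y : ℝ) : Nn n (-Y) = -Nn n Y := by
  rw [Nn, Nn, abs_neg, mul_neg]

theorem no_pos_solution_Nn {Y : ℝ → ℝ} {n a c : ℝ} (hn : 0 < n + 1) (ha : 0 ≤ a) (hc : 0 < c)
    (hd : ∀ y, a < y → DifferentiableAt ℝ Y y ∧ DifferentiableAt ℝ (deriv Y) y)
    (hpos : ∀ y, a < y → 0 < Y y)
    (heq : ∀ y, a < y → deriv (deriv Y) y = -c * y * Nn n (Y y)) : False :=
  no_pos_solution_rpow (p := 1 / (n + 1)) ha hc (by positivity) hd hpos fun y hy => by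
    rw [heq y hy, Nn_of_pos hn.ne' (hpos y hy)]

theorem no_neg_solution_Nn {Y : ℝ → ℝ} {n a c : ℝ} (hn : 0 < n + 1) (ha : 0 ≤ a) (hc : 0 < c)
    (hd : ∀ y, a < y → DifferentiableAt ℝ Y y ∧ DifferentiableAt ℝ (deriv Y) y)
    (hneg : ∀ y, a < y → Y y < 0)
    (heq : ∀ y, a < y → deriv (deriv Y) y = -c * y * Nn n (Y y)) : False := by
  have hderiv : deriv (-Y) = -deriv Y := deriv.neg'
  refine no_pos_solution_Nn (Y := -Y) hn ha hc (fun y hy => ?_) (fun y hy => ?_) (fun y hy => ?_)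
  · rw [hderiv]
    exact ⟨(hd y hy).1.neg, (hd y hy).2.neg⟩
  · simpa using hneg y hy
  · rw [hderiv, deriv.neg, heq y hy, Pi.neg_apply, Nn_neg]
    ring

/-- Let `n > 0`, `b ≥ 0`. There is no twice differentiable
solution of `Y'' = -(1/(n+3))·y·Y^{1/(n+1)}` on `(b, ∞)` which is everywhere
positive there, nor one (for the odd-power form of the equation) which is
everywhere negative; consequently every twice differentiable solution of
`Y'' = -(1/(n+3))·y·N_n(Y)` on `(b, ∞)` has an unbounded set of zeros. -/
theorem stmt6 (n b : ℝ) (hn : 0 < n) (hb : 0 ≤ b) :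
    (¬ ∃ Y : ℝ → ℝ,
      (∀ y : ℝ, b < y → DifferentiableAt ℝ Y y ∧ DifferentiableAt ℝ (deriv Y) y) ∧
      (∀ y : ℝ, b < y → 0 < Y y) ∧
      (∀ y : ℝ, b < y →
        deriv (deriv Y) y = -(1 / (n + 3)) * y * Y y ^ (1 / (n + 1)))) ∧
    (¬ ∃ Y : ℝ → ℝ,
      (∀ y : ℝ, b < y → DifferentiableAt ℝ Y y ∧ DifferentiableAt ℝ (deriv Y) y) ∧
      (∀ y : ℝ, b < y → Y y < 0) ∧
      (∀ y : ℝ, b < y →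
        deriv (deriv Y) y = -(1 / (n + 3)) * y * Nn n (Y y))) ∧
    (∀ Y : ℝ → ℝ,
      (∀ y : ℝ, b < y → DifferentiableAt ℝ Y y ∧ DifferentiableAt ℝ (deriv Y) y) →
      (∀ y : ℝ, b < y →
        deriv (deriv Y) y = -(1 / (n + 3)) * y * Nn n (Y y)) →
      ∀ M : ℝ, ∃ y : ℝ, M < y ∧ b < y ∧ Y y = 0) := by
  have hn₁ : 0 < n + 1 := by linarith
  have hc : 0 < 1 / (n + 3) := by positivity
  refine ⟨fun ⟨Y, hd, hpos, heq⟩ => no_pos_solution_rpow hb hc (by positivity) hd hpos heq,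
    fun ⟨Y, hd, hneg, heq⟩ => no_neg_solution_Nn hn₁ hb hc hd hneg heq, fun Y hd heq M => ?_⟩
  by_contra! hzero
  set a := max M b
  have hba : b ≤ a := le_max_right M b
  have hd' := fun y (hy : a < y) => hd y (hba.trans_lt hy)
  have heq' := fun y (hy : a < y) => heq y (hba.trans_lt hy)
  have hcont : ContinuousOn Y (Ioi a) := fun y hy => (hd' y hy).1.continuousAt.continuousWithinAt
  rcases isPreconnected_Ioi.forall_lt_or_forall_gt hcont (c := 0) fun y hy =>
      hzero y ((le_max_left M b).trans_lt hy) (hba.trans_lt hy) with hpos | hneg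
  · exact no_pos_solution_Nn hn₁ (hb.trans hba) hc hd' hpos heq'
  · exact no_neg_solution_Nn hn₁ (hb.trans hba) hc hd' hneg heq'
end

section
/- Define T1(y) = −(1/3)(y+1)²(y − 1/2). Then T1(−1) = 0, T1'(−1) = 0, T1'(0) = 0, T1 > 0 on (−1, 1/2), and y·T1''(y) − T1'(y) + y² = 0 for all y. Moreover, for z > 1/2 define T2(y) = (y − 1/2)(y − z)·( y/3 + z/(3(1+2z)) ). Then y·T2''(y) − T2'(y) − y² = 0 for all y, T2(1/2) = T2(z) = 0, and the C¹ matching condition T1'(1/2) = T2'(1/2) holds if and only if 4z² − 10z − 5 = 0; the unique positive root of this quadratic is z = (5 + 3√5)/4. Hence the first two zeros after the interface of the second limit nonlinear eigenfunction are y_1 = 1/2 and y_2 = (5 + 3√5)/4. -/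
/-!
Both arcs are cubics without a linear term, and for any cubic `a y³ + b y² + c y + d` the
operator `y f'' - f'` gives `3a y² - c`; so the leading coefficients `∓1/3` are forced by the
sign of the arc, and the only constraint left is the `C¹` matching at `y = 1/2`, which after
clearing the denominator `6(1 + 2z)` is the quadratic `4z² - 10z - 5 = 0`.
-/

open Real Set

section Cubic

variable (a b c d : ℝ)

theorem hasDerivAt_cubic (y : ℝ) :
    HasDerivAt (fun y : ℝ => a * y ^ 3 + b * y ^ 2 + c * y + d)
      (3 * a * y ^ 2 + 2 * b * y + c) y := by
  have h := ((((hasDerivAt_pow 3 y).const_mul a).add ((hasDerivAt_pow 2 y).const_mul b)).add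
    ((hasDerivAt_id y).const_mul c)).add_const d
  exact h.congr_deriv (by push_cast; ring)

theorem deriv_cubic :
    deriv (fun y : ℝ => a * y ^ 3 + b * y ^ 2 + c * y + d) =
      fun y => 3 * a * y ^ 2 + 2 * b * y + c :=
  funext fun y => (hasDerivAt_cubic a b c d y).deriv

theorem deriv_deriv_cubic :
    deriv (deriv fun y : ℝ => a * y ^ 3 + b * y ^ 2 + c * y + d) =
      fun y => 6 * a * y + 2 * b := by
  have h : (fun y : ℝ => 3 * a * y ^ 2 + 2 * b * y + c) =
      fun y => 0 * y ^ 3 + 3 * a * y ^ 2 + 2 * b * y + c := by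
    funext y; ring
  rw [deriv_cubic, h, deriv_cubic]
  funext y; ring

theorem cubic_euler_residual (y : ℝ) :
    y * deriv (deriv fun y : ℝ => a * y ^ 3 + b * y ^ 2 + c * y + d) y
      - deriv (fun y : ℝ => a * y ^ 3 + b * y ^ 2 + c * y + d) y = 3 * a * y ^ 2 - c := by
  rw [deriv_deriv_cubic, deriv_cubic]
  ring

end Cubic

noncomputable def firstArc (y : ℝ) : ℝ := -(1 / 3) * (y + 1) ^ 2 * (y - 1 / 2)

noncomputable def secondArc (z y : ℝ) : ℝ :=
  (y - 1 / 2) * (y - z) * (y / 3 + z / (3 * (1 + 2 * z)))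

theorem firstArc_eq_cubic :
    firstArc = fun y => -(1 / 3) * y ^ 3 + -(1 / 2) * y ^ 2 + 0 * y + 1 / 6 := by
  funext y; unfold firstArc; ring

theorem deriv_firstArc (y : ℝ) : deriv firstArc y = -y * (y + 1) := by
  rw [firstArc_eq_cubic, deriv_cubic]; ring

theorem firstArc_ode (y : ℝ) :
    y * deriv (deriv firstArc) y - deriv firstArc y + y ^ 2 = 0 := by
  rw [firstArc_eq_cubic, cubic_euler_residual]; ring

theorem firstArc_pos {y : ℝ} (hy : y ∈ Ioo (-1 : ℝ) (1 / 2)) : 0 < firstArc y :=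
  calc 0 < (-(1 / 3) * (y - 1 / 2)) * (y + 1) ^ 2 :=
        mul_pos (by linarith [hy.2]) (pow_pos (by linarith [hy.1]) 2)
    _ = firstArc y := by unfold firstArc; ring

/-- The choice `z / (3(1 + 2z))` of the third root kills the linear coefficient. -/
theorem secondArc_eq_cubic {z : ℝ} (hz : 1 + 2 * z ≠ 0) :
    secondArc z = fun y => (1 / 3) * y ^ 3 + (z / (3 * (1 + 2 * z)) - (2 * z + 1) / 6) * y ^ 2
      + 0 * y + z ^ 2 / (6 * (1 + 2 * z)) := by
  funext y; unfold secondArc; field_simp; ring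

theorem secondArc_ode {z : ℝ} (hz : 1 + 2 * z ≠ 0) (y : ℝ) :
    y * deriv (deriv (secondArc z)) y - deriv (secondArc z) y - y ^ 2 = 0 := by
  rw [secondArc_eq_cubic hz, cubic_euler_residual]; ring

theorem deriv_firstArc_half_eq_deriv_secondArc_iff {z : ℝ} (hz : 1 + 2 * z ≠ 0) :
    deriv firstArc (1 / 2) = deriv (secondArc z) (1 / 2) ↔ 4 * z ^ 2 - 10 * z - 5 = 0 := by
  rw [deriv_firstArc, secondArc_eq_cubic hz, deriv_cubic]
  constructor <;> intro h
  · field_simp at h; linarith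
  · field_simp; linarith

theorem quadratic_pos_root_iff {z : ℝ} (hz : 0 < z) :
    4 * z ^ 2 - 10 * z - 5 = 0 ↔ z = (5 + 3 * √5) / 4 := by
  have h5 : √5 * √5 = 5 := mul_self_sqrt (by norm_num)
  have hdiscrim : discrim 4 (-10) (-5 : ℝ) = (6 * √5) * (6 * √5) := by
    rw [discrim]; linear_combination (-36) * h5
  rw [show 4 * z ^ 2 - 10 * z - 5 = 4 * (z * z) + -10 * z + -5 by ring,
    quadratic_eq_zero_iff (by norm_num) hdiscrim]
  have hneg : (-(-10) - 6 * √5) / (2 * 4) < 0 := by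
    nlinarith [sq_sqrt (show (0 : ℝ) ≤ 5 by norm_num), sqrt_nonneg 5]
  constructor
  · rintro (h | h)
    · rw [h]; ring
    · linarith
  · intro h; left; rw [h]; ring

/-- First two arcs of the second limit nonlinear
eigenfunction (`k = 1`, `l = 1`, equation `y·Ỹ'' - Ỹ' + sign(Ỹ)·y² = 0`):
`T1(y) = -(1/3)(y+1)²(y - 1/2)` satisfies the interface and singular-point
conditions and the positive-arc equation, while for `z > 1/2` the arc
`T2(y) = (y - 1/2)(y - z)(y/3 + z/(3(1+2z)))` satisfies the negative-arc
equation, vanishes at `1/2` and `z`, and C¹-matches `T1` at `1/2` iff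
`4z² - 10z - 5 = 0`, whose unique positive root is `z = (5 + 3√5)/4`. -/
theorem stmt15 :
    let T1 : ℝ → ℝ := fun y => -(1 / 3) * (y + 1) ^ 2 * (y - 1 / 2)
    T1 (-1) = 0 ∧
    deriv T1 (-1) = 0 ∧
    deriv T1 0 = 0 ∧
    (∀ y ∈ Set.Ioo (-1 : ℝ) (1 / 2 : ℝ), 0 < T1 y) ∧
    (∀ y : ℝ, y * deriv (deriv T1) y - deriv T1 y + y ^ 2 = 0) ∧
    (∀ z : ℝ, 1 / 2 < z →
      let T2 : ℝ → ℝ := fun y =>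
        (y - 1 / 2) * (y - z) * (y / 3 + z / (3 * (1 + 2 * z)))
      (∀ y : ℝ, y * deriv (deriv T2) y - deriv T2 y - y ^ 2 = 0) ∧
      T2 (1 / 2) = 0 ∧ T2 z = 0 ∧
      (deriv T1 (1 / 2) = deriv T2 (1 / 2) ↔
        4 * z ^ 2 - 10 * z - 5 = 0)) ∧
    (∀ z : ℝ, 0 < z →
      (4 * z ^ 2 - 10 * z - 5 = 0 ↔ z = (5 + 3 * Real.sqrt 5) / 4)) := by
  refine ⟨by norm_num, (deriv_firstArc _).trans (by norm_num),
    (deriv_firstArc _).trans (by norm_num),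
    fun y hy => firstArc_pos hy, firstArc_ode, fun z hz => ?_,
    fun z hz => quadratic_pos_root_iff hz⟩
  have hz' : 1 + 2 * z ≠ 0 := by linarith
  exact ⟨secondArc_ode hz', by norm_num, by ring,
    deriv_firstArc_half_eq_deriv_secondArc_iff hz'⟩
end
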